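/- Let W be a multiset of cyclic strings over {a,b}, x a string occurring in W, and let [i_y..j_y) denote the y-interval for y ∈ {x, ax, bx}. If the ax-interval is empty (n_{ax} = 0), then LCP[i_{bx}+1..j_{bx}) equals the array obtained from LCP[i_x+1..j_x) by adding 1 to every element. -/

import Mathlib

set_option linter.unusedSectionVars false

namespace SILA

variable {α : Type*} [LinearOrder α]

/-- Lexicographic order on infinite strings. -/
def lexLE (f g : ℕ → α) : Prop :=
  f = g ∨ ∃ k, (∀ m < k, f m = g m) ∧ f k < g k

/-- Length of longest common prefix of two infinite strings, in ℕ∞. -/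
noncomputable def lcpInf (f g : ℕ → α) : ℕ∞ :=
  sSup {m : ℕ∞ | ∀ k : ℕ, (k : ℕ∞) < m → f k = g k}

/-- A (nonempty) cyclic word. -/
structure CyclicWord (α : Type*) where
  word : List α
  ne : word ≠ []

def CyclicWord.len (w : CyclicWord α) : ℕ := w.word.length

lemma CyclicWord.len_pos (w : CyclicWord α) : 0 < w.len :=
  List.length_pos_iff.mpr w.ne

/-- Positions in a multiset (family) of cyclic words. -/
def Pos {s : ℕ} (W : Fin s → CyclicWord α) : Type _ :=
  (i : Fin s) × Fin (W i).len

instance {s : ℕ} (W : Fin s → CyclicWord α) : Fintype (Pos W) := by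
  unfold Pos; infer_instance

/-- The infinite cyclic suffix starting at a position. -/
def suffixAt {s : ℕ} (W : Fin s → CyclicWord α) (p : Pos W) : ℕ → α :=
  fun k => (W p.1).word.get ⟨(p.2.val + k) % (W p.1).len, Nat.mod_lt _ (W p.1).len_pos⟩

/-- `SA` is a cyclic suffix array of `W`: it enumerates all positions in
nondecreasing lexicographic order of their cyclic suffixes. -/
def IsCyclicSA {s n : ℕ} (W : Fin s → CyclicWord α) (SA : Fin n ≃ Pos W) : Prop :=
  ∀ r r' : Fin n, r ≤ r' → lexLE (suffixAt W (SA r)) (suffixAt W (SA r'))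

/-- The LCP array of a cyclic suffix array (meaningful on indices 1..n-1). -/
noncomputable def lcpArr {s n : ℕ} (W : Fin s → CyclicWord α) (SA : Fin n ≃ Pos W)
    (r : ℕ) : ℕ∞ :=
  if h : 0 < r ∧ r < n then
    lcpInf (suffixAt W (SA ⟨r - 1, by omega⟩)) (suffixAt W (SA ⟨r, h.2⟩))
  else 0

/-- The Burrows–Wheeler transform: character cyclically preceding the suffix of rank `r`. -/
def bwt {s n : ℕ} (W : Fin s → CyclicWord α) (SA : Fin n ≃ Pos W) (r : Fin n) : α :=
  (W (SA r).1).word.get ⟨((SA r).2.val + (W (SA r).1).len - 1) % (W (SA r).1).len,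
    Nat.mod_lt _ (W (SA r).1).len_pos⟩

/-- `x` is a (finite) prefix of the infinite string `f`. -/
def IsPrefix (x : List α) (f : ℕ → α) : Prop :=
  ∀ m : Fin x.length, f m.val = x.get m

/-- `[i..j)` is the x-interval: the ranks of exactly those suffixes with prefix `x`. -/
def IsXInterval {s n : ℕ} (W : Fin s → CyclicWord α) (SA : Fin n ≃ Pos W)
    (x : List α) (i j : ℕ) : Prop :=
  i ≤ j ∧ j ≤ n ∧ ∀ r : Fin n, IsPrefix x (suffixAt W (SA r)) ↔ (i ≤ r.val ∧ r.val < j)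

/-- `[i..j)` is an ℓ-interval of the LCP array `L` (of length `n`, indices 1..n-1). -/
def IsLInterval (L : ℕ → ℕ∞) (n : ℕ) (ℓ : ℕ∞) (i j : ℕ) : Prop :=
  i < j ∧ j ≤ n ∧
  (i = 0 ∨ L i < ℓ) ∧
  (∀ r, i < r → r < j → ℓ ≤ L r) ∧
  ((i + 1 = j ∧ ℓ = ⊤) ∨ ∃ r, i < r ∧ r < j ∧ L r = ℓ) ∧
  (j = n ∨ L j < ℓ)

/-! Here `a = false` and `b = true`. If no occurrence of `x` is cyclically preceded by `a`,
then stepping back one position is a bijection from the occurrences of `x` onto those of `bx`,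
so `n_bx = n_x`. Prepending `b` preserves the lexicographic order, so the sorted suffixes of the
bx-interval are those of the x-interval with `b` prepended; this holds even when suffixes repeat,
because a monotone rearrangement of a tuple is unique (`Tuple.unique_monotone`). Finally,
prepending a common letter adds 1 to the longest common prefix. -/

lemma lexLE_iff_toLex_le {f g : ℕ → α} : lexLE f g ↔ toLex f ≤ toLex g := Iff.rfl

lemma lexLE_of_tail {f g : ℕ → α} (h0 : f 0 = g 0)
    (h : lexLE (fun k => f (k + 1)) (fun k => g (k + 1))) : lexLE f g := by
  rcases h with h | ⟨k, hk, hlt⟩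
  · left
    funext k
    cases k with
    | zero => exact h0
    | succ k => exact congrFun h k
  · refine Or.inr ⟨k + 1, fun m hm => ?_, hlt⟩
    cases m with
    | zero => exact h0
    | succ m => exact hk m (by omega)

lemma natCast_le_lcpInf_iff {f g : ℕ → α} {k : ℕ} :
    (k : ℕ∞) ≤ lcpInf f g ↔ ∀ j < k, f j = g j := by
  refine ⟨fun h j hj => ?_, fun h => le_sSup fun j hj => h j (by exact_mod_cast hj)⟩
  obtain ⟨m, hm, hjm⟩ := lt_sSup_iff.mp ((Nat.cast_lt.mpr hj).trans_le h)
  exact hm j hjm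

lemma lcpInf_eq_one_add_tail {f g : ℕ → α} (h0 : f 0 = g 0) :
    lcpInf f g = 1 + lcpInf (fun k => f (k + 1)) (fun k => g (k + 1)) := by
  refine ENat.eq_of_forall_natCast_le_iff fun k => ?_
  cases k with
  | zero => simp
  | succ k =>
    rw [natCast_le_lcpInf_iff, Nat.cast_succ, add_comm (k : ℕ∞),
      ENat.add_le_add_iff_left ENat.one_ne_top, natCast_le_lcpInf_iff, Nat.forall_lt_succ_left]
    exact and_iff_right h0

lemma isPrefix_cons_iff {c : α} {x : List α} {f : ℕ → α} :
    IsPrefix (c :: x) f ↔ f 0 = c ∧ IsPrefix x (fun k => f (k + 1)) := by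
  refine ⟨fun h => ⟨h ⟨0, by simp⟩, fun m => h m.succ⟩, fun ⟨h0, h⟩ m => ?_⟩
  cases m using Fin.cases with
  | zero => exact h0
  | succ m => exact h m

section

variable {s n : ℕ} {W : Fin s → CyclicWord α} {SA : Fin n ≃ Pos W}

def nextPos (W : Fin s → CyclicWord α) : Pos W ≃ Pos W :=
  Equiv.sigmaCongrRight fun i => finRotate (W i).len

lemma suffixAt_nextPos (p : Pos W) (k : ℕ) :
    suffixAt W (nextPos W p) k = suffixAt W p (k + 1) := by
  obtain ⟨i, v⟩ := p
  have := v.neZero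
  unfold suffixAt
  congr 2
  change ((finRotate _ v : Fin _) + k) % (W i).len = (v + (k + 1)) % (W i).len
  rw [finRotate_apply, Fin.val_add, Fin.val_one', Nat.mod_add_mod, add_right_comm,
    Nat.add_mod_mod, add_assoc]

lemma suffixAt_nextPos_symm_succ (p : Pos W) (k : ℕ) :
    suffixAt W ((nextPos W).symm p) (k + 1) = suffixAt W p k := by
  rw [← suffixAt_nextPos, Equiv.apply_symm_apply]

def AlwaysPrecededBy (W : Fin s → CyclicWord α) (x : List α) (c : α) : Prop :=
  ∀ p : Pos W, IsPrefix x (suffixAt W p) → suffixAt W ((nextPos W).symm p) 0 = c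

def IsXInterval.rankEquiv {x : List α} {i j : ℕ} (h : IsXInterval W SA x i j) :
    Fin (j - i) ≃ {p : Pos W // IsPrefix x (suffixAt W p)} where
  toFun t := ⟨SA ⟨i + t, by have := h.2.1; omega⟩, (h.2.2 _).2 ⟨by simp, by simp; omega⟩⟩
  invFun p := ⟨SA.symm p - i, by
    have := (h.2.2 (SA.symm p)).1 (by simpa using p.2)
    omega⟩
  left_inv t := by ext; simp
  right_inv p := by
    have := (h.2.2 (SA.symm p)).1 (by simpa using p.2)
    ext
    simp [show i + (↑(SA.symm ↑p) - i) = SA.symm p by omega]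

lemma IsXInterval.rankEquiv_apply {x : List α} {i j : ℕ} (h : IsXInterval W SA x i j)
    (t : Fin (j - i)) : (h.rankEquiv t : Pos W) = SA ⟨i + t, by have := h.2.1; omega⟩ := rfl

lemma IsXInterval.monotone_rankEquiv (hSA : IsCyclicSA W SA) {x : List α} {i j : ℕ}
    (h : IsXInterval W SA x i j) : Monotone fun t => toLex (suffixAt W (h.rankEquiv t)) :=
  fun t t' htt' => lexLE_iff_toLex_le.mp (hSA _ _ (by simpa using htt'))

lemma IsXInterval.lcpArr_add {x : List α} {i j : ℕ} (h : IsXInterval W SA x i j)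
    (t : Fin (j - i)) (ht : 0 < (t : ℕ)) :
    lcpArr W SA (i + t) =
      lcpInf (suffixAt W (h.rankEquiv ⟨t - 1, by omega⟩)) (suffixAt W (h.rankEquiv t)) := by
  have := h.2.1
  rw [lcpArr, dif_pos ⟨by omega, by omega⟩, rankEquiv_apply, rankEquiv_apply]
  congr 4
  dsimp only
  omega

variable {x : List α} {c : α}

def prevOccEquiv (hprec : AlwaysPrecededBy W x c) :
    {p : Pos W // IsPrefix x (suffixAt W p)} ≃ {q : Pos W // IsPrefix (c :: x) (suffixAt W q)} :=
  (nextPos W).symm.subtypeEquiv fun p => by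
    simp only [isPrefix_cons_iff, suffixAt_nextPos_symm_succ]
    exact ⟨fun hp => ⟨hprec p hp, hp⟩, And.right⟩

variable {ix jx ic jc : ℕ}

lemma length_consInterval_eq (hx : IsXInterval W SA x ix jx)
    (hcx : IsXInterval W SA (c :: x) ic jc)
    (hprec : AlwaysPrecededBy W x c) :
    jc - ic = jx - ix :=
  (Fin.equiv_iff_eq.mp ⟨hx.rankEquiv.trans ((prevOccEquiv hprec).trans hcx.rankEquiv.symm)⟩).symm

lemma suffixAt_rankEquiv_consInterval (hSA : IsCyclicSA W SA) (hx : IsXInterval W SA x ix jx)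
    (hcx : IsXInterval W SA (c :: x) ic jc)
    (hprec : AlwaysPrecededBy W x c)
    (t : Fin (jc - ic)) :
    suffixAt W (hcx.rankEquiv t) = suffixAt W ((nextPos W).symm
      (hx.rankEquiv (Fin.cast (length_consInterval_eq hx hcx hprec) t))) := by
  set hm := length_consInterval_eq hx hcx hprec
  let σ : Equiv.Perm (Fin (jc - ic)) :=
    (finCongr hm).trans (hx.rankEquiv.trans ((prevOccEquiv hprec).trans hcx.rankEquiv.symm))
  let u := fun t => toLex (suffixAt W (hcx.rankEquiv t))
  have hσ : ∀ t,
      u (σ t) = toLex (suffixAt W ((nextPos W).symm (hx.rankEquiv (Fin.cast hm t)))) := by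
    intro t
    simp [σ, u, prevOccEquiv]
  have hmono : Monotone (u ∘ σ) := fun a b hab => by
    rw [Function.comp_apply, Function.comp_apply, hσ, hσ]
    refine lexLE_iff_toLex_le.mp (lexLE_of_tail ?_ ?_)
    · exact (hprec _ (hx.rankEquiv _).2).trans (hprec _ (hx.rankEquiv _).2).symm
    · simp only [suffixAt_nextPos_symm_succ]
      exact hx.monotone_rankEquiv hSA (show Fin.cast hm a ≤ Fin.cast hm b from hab)
  have hsorted := Tuple.unique_monotone (τ := Equiv.refl _) hmono (hcx.monotone_rankEquiv hSA)
  exact (congrArg ofLex ((hσ t).symm.trans (congrFun hsorted t))).symm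

theorem lcpArr_consInterval (hSA : IsCyclicSA W SA) (hx : IsXInterval W SA x ix jx)
    (hcx : IsXInterval W SA (c :: x) ic jc)
    (hprec : AlwaysPrecededBy W x c)
    {t : ℕ} (ht0 : 0 < t) (ht : t < jc - ic) :
    lcpArr W SA (ic + t) = 1 + lcpArr W SA (ix + t) := by
  have hm := length_consInterval_eq hx hcx hprec
  have hsuffix := suffixAt_rankEquiv_consInterval hSA hx hcx hprec
  rw [hcx.lcpArr_add ⟨t, ht⟩ ht0, hx.lcpArr_add ⟨t, hm ▸ ht⟩ ht0, hsuffix, hsuffix,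
    lcpInf_eq_one_add_tail]
  · simp only [suffixAt_nextPos_symm_succ]
    rfl
  · exact (hprec _ (hx.rankEquiv _).2).trans (hprec _ (hx.rankEquiv _).2).symm

lemma alwaysPrecededBy_true_of_isXInterval_empty {W : Fin s → CyclicWord Bool}
    {SA : Fin n ≃ Pos W} {x : List Bool} {i : ℕ} (h : IsXInterval W SA (false :: x) i i) :
    AlwaysPrecededBy W x true := by
  intro p hp
  by_contra hfalse
  have hfalse_occ : IsPrefix (false :: x) (suffixAt W (SA (SA.symm ((nextPos W).symm p)))) := by
    rw [Equiv.apply_symm_apply, isPrefix_cons_iff, eq_false_of_ne_true hfalse]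
    exact ⟨rfl, by simpa only [suffixAt_nextPos_symm_succ] using hp⟩
  have := (h.2.2 _).1 hfalse_occ
  omega

end

theorem lcp_match_when_ax_empty {s n : ℕ}
    (W : Fin s → CyclicWord Bool) (SA : Fin n ≃ Pos W) (hSA : IsCyclicSA W SA)
    (x : List Bool) (ix jx iax jax ibx jbx : ℕ)
    (hx : IsXInterval W SA x ix jx)
    (hax : IsXInterval W SA (false :: x) iax jax)
    (hbx : IsXInterval W SA (true :: x) ibx jbx)
    (hempty : iax = jax) :
    jbx - ibx = jx - ix ∧
    ∀ t : ℕ, 0 < t → t < jbx - ibx →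
      lcpArr W SA (ibx + t) = 1 + lcpArr W SA (ix + t) := by
  have hprec := alwaysPrecededBy_true_of_isXInterval_empty (hempty ▸ hax)
  exact ⟨length_consInterval_eq hx hbx hprec,
    fun _ ht0 ht => lcpArr_consInterval hSA hx hbx hprec ht0 ht⟩

end SILA
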